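/- Let 1 ≤ k < n, let E_1, …, E_n be Banach spaces over 𝕂 (= ℝ or ℂ), let A : E_1 × ⋯ × E_n → 𝕂 be a continuous n-linear form, and let A_k : E_1 × ⋯ × E_k → L(E_{k+1},…,E_n;𝕂) be the associated k-linear map into the Banach space of continuous (n−k)-linear forms, A_k(x^1,…,x^k)(x^{k+1},…,x^n) = A(x^1,…,x^n). If A_k is almost summing, then for all finite families (x_j^i)_{j=1}^m in E_i (i = 1,…,n): Σ_{j=1}^m |A(x_j^1,…,x_j^n)| ≤ ‖A_k‖_{a.s} · ∏_{i=1}^k ‖(x_j^i)_{j=1}^m‖_{ℓ_2^w(E_i)} · ∏_{i=k+1}^n ‖(x_j^i)_{j=1}^m‖_{Rad(E_i)}. -/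

import Mathlib

open scoped BigOperators NNReal ENNReal

/-- The weak `ℓ_r` norm of a finite family `(x_j)` in a normed space:
`sup_{‖φ‖ ≤ 1} (∑_j ‖φ(x_j)‖^r)^(1/r)`. -/
noncomputable def weakNorm (𝕜 : Type*) [RCLike 𝕜] {E : Type*} [NormedAddCommGroup E]
    [NormedSpace 𝕜 E] (r : ℝ) {m : ℕ} (x : Fin m → E) : ℝ :=
  ⨆ φ : {φ : E →L[𝕜] 𝕜 // ‖φ‖ ≤ 1}, (∑ j, ‖φ.1 (x j)‖ ^ r) ^ (1 / r)

/-- The Rademacher norm of a finite family `(x_j)_{j=1}^m` in a normed space: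
`(2^{-m} ∑_{ε ∈ {-1,1}^m} ‖∑_j ε_j x_j‖²)^{1/2}`. -/
noncomputable def radNorm {E : Type*} [NormedAddCommGroup E] {m : ℕ} (x : Fin m → E) : ℝ :=
  ((∑ ε : Fin m → Bool, ‖∑ j, (if ε j then x j else -x j)‖ ^ 2) / (2 : ℝ) ^ m) ^ ((1 : ℝ) / 2)

/-! Rotating one of the first `k` families by unimodular scalars `c_j` with `c_j A(x_j) = |A(x_j)|`
leaves its weak `ℓ₂` norm unchanged and turns `∑_j |A(x_j)|` into `|∑_j T_j(y_j)|`, where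
`T_j = A_k(x_j^1, …, x_j^k)` and `y_j = (x_j^{k+1}, …, x_j^n)`. By orthogonality of Rademacher signs,
`∑_j T_j(y_j)` is the average over independent sign vectors `ε^1, …, ε^l` of
`(∑_j ε_j^1 ⋯ ε_j^l T_j)(∑_j ε_j^1 y_j^{k+1}, …, ∑_j ε_j^l y_j^n)`. Bounding this by the operator norm
and applying Cauchy–Schwarz gives `‖(T_j)‖_Rad ∏_i ‖(y_j^i)‖_Rad`, because the pointwise product of
`l ≥ 1` independent uniform sign vectors is again uniform; almost summability bounds `‖(T_j)‖_Rad`. -/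

open Finset

theorem Fintype.sum_comp_prod_fin_succ {Γ M : Type*} [CommGroup Γ] [Fintype Γ] [AddCommMonoid M]
    (l : ℕ) (g : Γ → M) :
    ∑ ε : Fin (l + 1) → Γ, g (∏ i, ε i) = Fintype.card Γ ^ l • ∑ γ, g γ := by
  rw [← (Fin.consEquiv fun _ => Γ).sum_comp, Fintype.sum_prod_type_right]
  simp only [Fin.consEquiv_apply, Fin.prod_univ_succ, Fin.cons_zero, Fin.cons_succ]
  have hshift (c : Γ) : ∑ a, g (a * c) = ∑ γ, g γ := Equiv.sum_comp (Equiv.mulRight c) g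
  simp [hshift]

section Signs

variable {m : ℕ}

theorem card_signs : Fintype.card (Fin m → ℤˣ) = 2 ^ m := by
  simp [Fintype.card_units_int]

theorem sum_signs_mul_eq_ite (j j' : Fin m) :
    ∑ ε : Fin m → ℤˣ, ((ε j * ε j' : ℤˣ) : ℤ) = if j = j' then 2 ^ m else 0 := by
  split_ifs with h
  · simp [h, Int.units_mul_self]
  · -- flipping the `j`-th sign permutes the sign vectors and negates every summand
    set flip : Fin m → ℤˣ := Pi.mulSingle j (-1)
    have hflip : ∀ ε : Fin m → ℤˣ,
        (((ε * flip) j * (ε * flip) j' : ℤˣ) : ℤ) = -((ε j * ε j' : ℤˣ) : ℤ) := fun ε => by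
      simp [flip, Ne.symm h]
    have hS := Equiv.sum_comp (Equiv.mulRight flip) fun ε => ((ε j * ε j' : ℤˣ) : ℤ)
    simp only [Equiv.coe_mulRight, hflip, sum_neg_distrib] at hS
    omega

variable {E : Type*} [NormedAddCommGroup E]

theorem radNorm_nonneg (x : Fin m → E) : 0 ≤ radNorm x := by
  unfold radNorm
  positivity

theorem sum_sq_norm_sum_signs_smul (x : Fin m → E) :
    ∑ ε : Fin m → ℤˣ, ‖∑ j, ε j • x j‖ ^ 2 = 2 ^ m * radNorm x ^ 2 := by
  have hsign : Function.Bijective fun b : Bool => if b then (1 : ℤˣ) else -1 :=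
    ⟨by decide, fun u => (Int.units_eq_one_or u).elim (fun h => ⟨true, h.symm⟩)
      fun h => ⟨false, h.symm⟩⟩
  rw [← Fintype.sum_bijective _ hsign.comp_left _ _ fun _ => rfl, radNorm,
    ← Real.sqrt_eq_rpow, Real.sq_sqrt (by positivity), mul_div_cancel₀ _ (by positivity)]
  refine sum_congr rfl fun ε _ => ?_
  congr 2
  refine sum_congr rfl fun j _ => ?_
  rw [Function.comp_apply]
  split_ifs <;> simp

end Signs

theorem ContinuousMultilinearMap.map_units_smul_univ {𝕜 ι : Type*} [RCLike 𝕜] [Fintype ι]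
    {G : ι → Type*} [∀ i, NormedAddCommGroup (G i)] [∀ i, NormedSpace 𝕜 (G i)]
    {F : Type*} [NormedAddCommGroup F] [NormedSpace 𝕜 F]
    (f : ContinuousMultilinearMap 𝕜 G F) (u : ι → ℤˣ) (v : ∀ i, G i) :
    f (fun i => u i • v i) = (∏ i, u i) • f v := by
  simp only [Units.smul_def, ← Int.cast_smul_eq_zsmul 𝕜, f.map_smul_univ, Units.coe_prod,
    Int.cast_prod]

section Decoupling

variable {𝕜 : Type*} [RCLike 𝕜] {l m : ℕ} {G : Fin l → Type*} [∀ i, NormedAddCommGroup (G i)]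
  [∀ i, NormedSpace 𝕜 (G i)] {F : Type*} [NormedAddCommGroup F] [NormedSpace 𝕜 F]

theorem sum_signs_apply_sum_signs_smul (T : Fin m → ContinuousMultilinearMap 𝕜 G F)
    (y : ∀ i, Fin m → G i) :
    ∑ ε : Fin l → Fin m → ℤˣ, (∑ j, (∏ i, ε i j) • T j) (fun i => ∑ j, ε i j • y i j)
      = (2 ^ m) ^ l • ∑ j, T j (fun i => y i j) := by
  classical
  have hexpand (ε : Fin l → Fin m → ℤˣ) :
      (∑ j, (∏ i, ε i j) • T j) (fun i => ∑ j, ε i j • y i j)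
        = ∑ j, ∑ r : Fin l → Fin m,
            (∏ i, ((ε i j * ε i (r i) : ℤˣ) : ℤ)) • T j (fun i => y i (r i)) := by
    simp only [_root_.sum_apply, smul_apply, ContinuousMultilinearMap.map_sum,
      ContinuousMultilinearMap.map_units_smul_univ, smul_sum, smul_smul, ← prod_mul_distrib]
    simp only [Units.smul_def, Units.coe_prod]
  have hcoeff (j : Fin m) (r : Fin l → Fin m) :
      ∑ ε : Fin l → Fin m → ℤˣ, ∏ i, ((ε i j * ε i (r i) : ℤˣ) : ℤ)
        = if r = fun _ => j then (2 ^ m) ^ l else 0 := by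
    rw [← Fintype.prod_sum fun i (e : Fin m → ℤˣ) => ((e j * e (r i) : ℤˣ) : ℤ)]
    simp only [sum_signs_mul_eq_ite, prod_ite_zero, prod_const, card_univ, Fintype.card_fin,
      mem_univ, forall_const, funext_iff, eq_comm]
  rw [sum_congr rfl fun ε _ => hexpand ε, sum_comm, smul_sum]
  refine sum_congr rfl fun j _ => ?_
  rw [sum_comm]
  simp only [← sum_smul, hcoeff, ite_smul, zero_smul, sum_ite_eq', mem_univ, if_true]
  exact_mod_cast rfl

theorem norm_sum_apply_le_radNorm_mul_prod_radNorm (hl : l ≠ 0)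
    (T : Fin m → ContinuousMultilinearMap 𝕜 G F) (y : ∀ i, Fin m → G i) :
    ‖∑ j, T j (fun i => y i j)‖ ≤ radNorm T * ∏ i, radNorm (y i) := by
  set N : ℝ := ((2 : ℝ) ^ m) ^ l
  have hN : 0 < N := by positivity
  set a := fun ε : Fin l → Fin m → ℤˣ => ‖∑ j, (∏ i, ε i j) • T j‖
  set b := fun ε : Fin l → Fin m → ℤˣ => ∏ i, ‖∑ j, ε i j • y i j‖
  have ha : ∑ ε, a ε ^ 2 = N * radNorm T ^ 2 := by
    obtain ⟨l, rfl⟩ := Nat.exists_eq_add_one_of_ne_zero hl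
    simp only [a, ← prod_apply]
    rw [Fintype.sum_comp_prod_fin_succ l fun η : Fin m → ℤˣ => ‖∑ j, η j • T j‖ ^ 2,
      sum_sq_norm_sum_signs_smul, card_signs]
    simp only [N]
    ring
  have hb : ∑ ε, b ε ^ 2 = N * (∏ i, radNorm (y i)) ^ 2 := by
    simp only [b, ← prod_pow]
    rw [← Fintype.prod_sum fun i (e : Fin m → ℤˣ) => ‖∑ j, e j • y i j‖ ^ 2]
    simp only [sum_sq_norm_sum_signs_smul, prod_mul_distrib, prod_const, card_univ,
      Fintype.card_fin, prod_pow, N]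
  refine le_of_mul_le_mul_left ?_ hN
  calc N * ‖∑ j, T j (fun i => y i j)‖
      = ‖∑ ε : Fin l → Fin m → ℤˣ,
          (∑ j, (∏ i, ε i j) • T j) (fun i => ∑ j, ε i j • y i j)‖ := by
        rw [sum_signs_apply_sum_signs_smul, RCLike.norm_nsmul 𝕜]
        simp [N]
    _ ≤ ∑ ε, a ε * b ε :=
        (norm_sum_le _ _).trans (sum_le_sum fun ε _ => ContinuousMultilinearMap.le_opNorm _ _)
    _ ≤ √(∑ ε, a ε ^ 2) * √(∑ ε, b ε ^ 2) := Real.sum_mul_le_sqrt_mul_sqrt _ _ _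
    _ = N * (radNorm T * ∏ i, radNorm (y i)) := by
        rw [ha, hb, Real.sqrt_mul hN.le, Real.sqrt_mul hN.le, Real.sqrt_sq (radNorm_nonneg _),
          Real.sqrt_sq (prod_nonneg fun i _ => radNorm_nonneg _)]
        linear_combination (radNorm T * ∏ i, radNorm (y i)) * Real.mul_self_sqrt hN.le

end Decoupling

theorem weakNorm_smul_of_norm_eq_one {𝕜 E : Type*} [RCLike 𝕜] [NormedAddCommGroup E]
    [NormedSpace 𝕜 E] (r : ℝ) {m : ℕ} {c : Fin m → 𝕜} (hc : ∀ j, ‖c j‖ = 1) (x : Fin m → E) :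
    weakNorm 𝕜 r (c • x) = weakNorm 𝕜 r x := by
  simp only [weakNorm, Pi.smul_apply', map_smul, smul_eq_mul, norm_mul, hc, one_mul]

theorem almost_summing_mixed_estimate_general {𝕜 : Type*} [RCLike 𝕜] {k l : ℕ} (hk : 1 ≤ k)
    (hl : 1 ≤ l)
    (E : Fin (k + l) → Type*) [∀ i, NormedAddCommGroup (E i)] [∀ i, NormedSpace 𝕜 (E i)]
    (A : ContinuousMultilinearMap 𝕜 E 𝕜)
    (Ak : ContinuousMultilinearMap 𝕜 (fun i : Fin k => E (Fin.castAdd l i))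
      (ContinuousMultilinearMap 𝕜 (fun i : Fin l => E (Fin.natAdd k i)) 𝕜))
    (hAAk : ∀ (v : ∀ i : Fin k, E (Fin.castAdd l i)) (w : ∀ i : Fin l, E (Fin.natAdd k i)),
      Ak v w = A (fun i => Fin.addCases (motive := fun i => E i) v w i))
    (C : ℝ)
    (hAk : ∀ (m : ℕ) (x : ∀ i : Fin k, Fin m → E (Fin.castAdd l i)),
      radNorm (fun j => Ak (fun i => x i j)) ≤ C * ∏ i, weakNorm 𝕜 2 (x i)) :
    ∀ (m : ℕ) (x : ∀ i, Fin m → E i),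
      ∑ j, ‖A (fun i => x i j)‖
        ≤ C * (∏ i : Fin k, weakNorm 𝕜 2 (x (Fin.castAdd l i)))
          * ∏ i : Fin l, radNorm (x (Fin.natAdd k i)) := by
  intro m x
  choose c hc_norm hc using fun j => RCLike.exists_norm_eq_mul_self (A fun i => x i j)
  let i₀ : Fin k := ⟨0, hk⟩
  let u := Function.update (fun i => x (Fin.castAdd l i)) i₀ (c • x (Fin.castAdd l i₀))
  have hAk_u (j : Fin m) : Ak (fun i => u i j) = c j • Ak (fun i => x (Fin.castAdd l i) j) := by
    simp only [u, Function.apply_update (fun i (w : Fin m → E (Fin.castAdd l i)) => w j),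
      Pi.smul_apply', Ak.map_update_smul, Function.update_eq_self]
  have hweak (i : Fin k) : weakNorm 𝕜 2 (u i) = weakNorm 𝕜 2 (x (Fin.castAdd l i)) := by
    simp only [u, Function.apply_update (fun i (w : Fin m → E (Fin.castAdd l i)) => weakNorm 𝕜 2 w),
      weakNorm_smul_of_norm_eq_one 2 hc_norm, Function.update_eq_self]
  have hterm (j : Fin m) :
      Ak (fun i => u i j) (fun i => x (Fin.natAdd k i) j) = ((‖A fun i => x i j‖ : ℝ) : 𝕜) := by
    rw [hAk_u, smul_apply, hAAk, smul_eq_mul, hc]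
    exact congrArg _ (congrArg A (funext (Fin.addCases_castAdd_natAdd fun i => x i j)))
  calc ∑ j, ‖A fun i => x i j‖
      = ‖∑ j, Ak (fun i => u i j) (fun i => x (Fin.natAdd k i) j)‖ := by
        rw [sum_congr rfl fun j _ => hterm j, ← RCLike.ofReal_sum, RCLike.norm_ofReal,
          abs_of_nonneg (sum_nonneg fun j _ => norm_nonneg _)]
    _ ≤ radNorm (fun j => Ak fun i => u i j) * ∏ i, radNorm (x (Fin.natAdd k i)) :=
        norm_sum_apply_le_radNorm_mul_prod_radNorm (by omega) _ _
    _ ≤ _ := by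
        simpa only [hweak] using mul_le_mul_of_nonneg_right (hAk m u)
          (prod_nonneg fun i _ => radNorm_nonneg (x (Fin.natAdd k i)))

/-- If the associated `k`-linear map `A_k` of an `n`-linear form `A` (here `n = k + l`,
`l ≥ 1`) into the space of continuous `(n−k)`-linear forms is almost summing with constant
`C`, then `∑_j |A(x_j^1, …, x_j^n)| ≤ C ∏_{i≤k} ‖(x_j^i)‖_{ℓ₂ʷ} ∏_{i>k} ‖(x_j^i)‖_{Rad}`. -/
theorem almost_summing_mixed_estimate {𝕜 : Type*} [RCLike 𝕜] {k l : ℕ} (hk : 1 ≤ k)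
    (hl : 1 ≤ l)
    (E : Fin (k + l) → Type*) [∀ i, NormedAddCommGroup (E i)] [∀ i, NormedSpace 𝕜 (E i)]
    [∀ i, CompleteSpace (E i)]
    (A : ContinuousMultilinearMap 𝕜 E 𝕜)
    (Ak : ContinuousMultilinearMap 𝕜 (fun i : Fin k => E (Fin.castAdd l i))
      (ContinuousMultilinearMap 𝕜 (fun i : Fin l => E (Fin.natAdd k i)) 𝕜))
    (hAAk : ∀ (v : ∀ i : Fin k, E (Fin.castAdd l i)) (w : ∀ i : Fin l, E (Fin.natAdd k i)),
      Ak v w = A (fun i => Fin.addCases (motive := fun i => E i) v w i))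
    (C : ℝ) (hC : 0 < C)
    (hAk : ∀ (m : ℕ) (x : ∀ i : Fin k, Fin m → E (Fin.castAdd l i)),
      radNorm (fun j => Ak (fun i => x i j)) ≤ C * ∏ i, weakNorm 𝕜 2 (x i)) :
    ∀ (m : ℕ) (x : ∀ i, Fin m → E i),
      ∑ j, ‖A (fun i => x i j)‖
        ≤ C * (∏ i : Fin k, weakNorm 𝕜 2 (x (Fin.castAdd l i)))
          * ∏ i : Fin l, radNorm (x (Fin.natAdd k i)) :=
  almost_summing_mixed_estimate_general hk hl E A Ak hAAk C hAk
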